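/- arXiv:0801.0463 — 5 statements merged into one kernel-verified Lean document; each statement's English description precedes it below -/
import Mathlib

section
/- For every ℓ ∈ ℝ, the real part of (iℓ−a)(−c(iℓ−a)² + c − n)/(1 − (iℓ−a)²) is at most −ac + an/(1−a²), provided c > n > 0 and 0 < a < 1. -/
open Complex

/-- For every `ℓ ∈ ℝ`, the real part of
`(iℓ−a)(−c(iℓ−a)² + c − n)/(1 − (iℓ−a)²)` is at most `−ac + an/(1−a²)`,
provided `c > n > 0` and `0 < a < 1`. -/
theorem essential_spectrum_re_le (n c a : ℝ) (hn : 0 < n) (hc : n < c)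
    (ha0 : 0 < a) (ha1 : a < 1) :
    ∀ ℓ : ℝ,
      ((Complex.I * ℓ - a) * (-c * (Complex.I * ℓ - a) ^ 2 + c - n) /
        (1 - (Complex.I * ℓ - a) ^ 2)).re ≤ -a * c + a * n / (1 - a ^ 2) := by
  intro ℓ
  have hb : (0:ℝ) < 1 - a^2 := by nlinarith
  have hD : (0:ℝ) < (1 - a^2 + ℓ^2)^2 + 4*a^2*ℓ^2 := by positivity
  have key : ((Complex.I * ℓ - a) * (-c * (Complex.I * ℓ - a) ^ 2 + c - n) /
        (1 - (Complex.I * ℓ - a) ^ 2)).re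
      = -a*c + (-(n * (a*ℓ^2 - a*(1-a^2)))) / ((1 - a^2 + ℓ^2)^2 + 4*a^2*ℓ^2) := by
    rw [Complex.div_re]
    have hne : (1 - a ^ 2 * 2 + a ^ 2 * ℓ ^ 2 * 2 + a ^ 4 + ℓ ^ 2 * 2 + ℓ ^ 4) ≠ 0 := by
      nlinarith
    simp [Complex.normSq_apply, pow_two]
    have hE : (1 - a ^ 2 * 2 + a ^ 2 * ℓ ^ 2 * 2 + a ^ 4 + ℓ ^ 2 * 2 + ℓ ^ 4) *
        (1 - a ^ 2 * 2 + a ^ 2 * ℓ ^ 2 * 2 + a ^ 4 + ℓ ^ 2 * 2 + ℓ ^ 4)⁻¹ = 1 :=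
      mul_inv_cancel₀ hne
    linear_combination (-(a*c)) * hE
  rw [key]
  have h1 : (-(n * (a*ℓ^2 - a*(1-a^2)))) / ((1 - a^2 + ℓ^2)^2 + 4*a^2*ℓ^2)
      ≤ a*n/(1-a^2) := by
    rw [div_le_div_iff₀ hD hb]
    nlinarith [sq_nonneg ℓ, sq_nonneg (ℓ^2), mul_pos ha0 hn, sq_nonneg (a*ℓ)]
  linarith
end

section
/- For c > n > 1, if μ is a root of the polynomial equation cμ + nμ/(μ²−1) = λ of multiplicity at least two with μ real and negative, then λ is real and λ ≤ −Ω̃(c), where Ω̃(c) = sqrt(1/8)·sqrt(8c² + 20cn − n² − 8c·sqrt(n² + 8cn) − n·sqrt(n² + 8cn)). -/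
set_option maxHeartbeats 1600000


/-- For `c > n > 1`, if `μ` is a real negative multiple root of `R(μ) = λ`
(i.e. `R(μ) = λ` and `R'(μ) = 0`, where `R(μ) = cμ + nμ/(μ²−1)`), then
`λ ≤ −Ω̃(c)` with
`Ω̃(c) = sqrt(1/8)·sqrt(8c² + 20cn − n² − 8c·sqrt(n²+8cn) − n·sqrt(n²+8cn))`. -/
theorem multiple_root_lambda_bound (n c : ℝ) (hn : 1 < n) (hc : n < c)
    (μ lam : ℝ) (hμneg : μ < 0) (hμ1 : μ ^ 2 ≠ 1)
    (hR : c * μ + n * μ / (μ ^ 2 - 1) = lam)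
    (hR' : c - n * (1 + μ ^ 2) / ((1 - μ ^ 2) ^ 2) = 0) :
    lam ≤ -(Real.sqrt (1 / 8) *
      Real.sqrt (8 * c ^ 2 + 20 * c * n - n ^ 2
        - 8 * c * Real.sqrt (n ^ 2 + 8 * c * n)
        - n * Real.sqrt (n ^ 2 + 8 * c * n))) := by
  have h0n : (0:ℝ) < n := by linarith
  have h0c : (0:ℝ) < c := by linarith
  set s := Real.sqrt (n ^ 2 + 8 * c * n) with hsdef
  have hs0 : 0 ≤ s := Real.sqrt_nonneg _
  have hs2 : s ^ 2 = n ^ 2 + 8 * c * n := Real.sq_sqrt (by positivity)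
  have hd : μ ^ 2 - 1 ≠ 0 := sub_ne_zero.mpr hμ1
  have hd' : (1 - μ ^ 2) ≠ 0 := by intro h; exact hμ1 (by linarith)
  have hd2 : ((1 - μ ^ 2) ^ 2) ≠ 0 := pow_ne_zero _ hd'
  -- derivative condition cleared of denominators
  have hC : n * (1 + μ ^ 2) = c * (1 - μ ^ 2) ^ 2 := by
    have h5 : n * (1 + μ ^ 2) / ((1 - μ ^ 2) ^ 2) = c := by linarith [hR']
    exact (div_eq_iff hd2).mp h5
  -- value condition cleared of denominators
  have hL : n * μ = (lam - c * μ) * (μ ^ 2 - 1) := by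
    have h6 : n * μ / (μ ^ 2 - 1) = lam - c * μ := by linarith [hR]
    exact (div_eq_iff hd).mp h6
  -- lam * (μ²-1)² = 2nμ³
  have hld : lam * (μ ^ 2 - 1) ^ 2 = 2 * n * μ ^ 3 := by
    linear_combination (-(μ ^ 2 - 1)) * hL - μ * hC
  -- lam < 0
  have hμ3 : μ ^ 3 < 0 := Odd.pow_neg (by decide) hμneg
  have hdpos : 0 < (μ ^ 2 - 1) ^ 2 := by positivity
  have hlam : lam < 0 := by nlinarith [hld, hdpos, hμ3]
  -- squared relation
  have h2 : lam ^ 2 * (μ ^ 2 - 1) ^ 4 = 4 * n ^ 2 * μ ^ 6 := by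
    linear_combination (lam * (μ ^ 2 - 1) ^ 2 + 2 * n * μ ^ 3) * hld
  -- quadratic in μ²
  have hquad : c * μ ^ 4 - (2 * c + n) * μ ^ 2 + (c - n) = 0 := by
    linear_combination (-1 : ℝ) * hC
  have hsq : (2 * c * μ ^ 2 - (2 * c + n)) * (2 * c * μ ^ 2 - (2 * c + n))
      - s ^ 2 = 0 := by
    linear_combination 4 * c * hquad - hs2
  have hcases : 2 * c * μ ^ 2 - (2 * c + n) = s ∨
      2 * c * μ ^ 2 - (2 * c + n) = -s := by
    have hz : (2 * c * μ ^ 2 - (2 * c + n) - s) *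
        (2 * c * μ ^ 2 - (2 * c + n) + s) = 0 := by linear_combination hsq
    rcases mul_eq_zero.mp hz with h | h
    · exact Or.inl (by linarith)
    · exact Or.inr (by linarith)
  -- key: A ≤ 8 lam²  where A is the radicand
  have hX : 0 ≤ 32 * n ^ 2 * μ ^ 6 -
      (8 * c ^ 2 + 20 * c * n - n ^ 2 - 8 * c * s - n * s) * (μ ^ 2 - 1) ^ 4 := by
    have h16 : (0:ℝ) < 16 * c ^ 4 := by positivity
    rcases hcases with hcase | hcase
    · have hkey : 16 * c ^ 4 * (32 * n ^ 2 * μ ^ 6 -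
          (8 * c ^ 2 + 20 * c * n - n ^ 2 - 8 * c * s - n * s) * (μ ^ 2 - 1) ^ 4)
          = 16*n^6 + 16*n^5*s + 320*c*n^5 + 256*c*n^4*s + 2048*c^2*n^4
            + 1152*c^2*n^3*s + 4096*c^3*n^3 + 1024*c^3*n^2*s := by
        linear_combination (1*n*s^4 + 4*n^2*s^3 + 6*n^3*s^2 + 4*n^4*s + 1*n^5 + 8*c*s^4 + 2*c*n*s^3 + 2*c*n*s^3*μ^2 + 22*c*n^2*s^2 + 6*c*n^2*s^2*μ^2 + 70*c*n^3*s + 6*c*n^3*s*μ^2 + 42*c*n^4 + 2*c*n^4*μ^2 + (-24)*c^2*s^3 + 16*c^2*s^3*μ^2 + (-12)*c^2*n*s^2 + (-16)*c^2*n*s^2*μ^2 + 4*c^2*n*s^2*μ^4 + 304*c^2*n^2*s + 48*c^2*n^2*s*μ^2 + 8*c^2*n^2*s*μ^4 + 292*c^2*n^3 + 80*c^2*n^3*μ^2 + 4*c^2*n^3*μ^4 + 48*c^3*s^2 + (-80)*c^3*s^2*μ^2 + 32*c^3*s^2*μ^4 + (-24)*c^3*n*s + 88*c^3*n*s*μ^2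 + (-72)*c^3*n*s*μ^4 + 8*c^3*n*s*μ^6 + 184*c^3*n^2 + 424*c^3*n^2*μ^2 + 152*c^3*n^2*μ^4 + 8*c^3*n^2*μ^6 + (-96)*c^4*s + 256*c^4*s*μ^2 + (-224)*c^4*s*μ^4 + 64*c^4*s*μ^6 + 128*c^4*n + (-416)*c^4*n*μ^2 + 448*c^4*n*μ^4 + (-160)*c^4*n*μ^6 + 64*c^5 + (-192)*c^5*μ^2 + 192*c^5*μ^4 + (-64)*c^5*μ^6) * hcase
          + (1*n*s^3 + 5*n^2*s^2 + 11*n^3*s + 15*n^4 + 8*c*s^3 + 12*c*n*s^2 + 48*c*n^2*s + 156*c*n^3 + (-8)*c^2*s^2 + 32*c^2*n*s + 424*c^2*n^2 + (-64)*c^3*n) * hs2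
      have hRpos : (0:ℝ) ≤ 16*n^6 + 16*n^5*s + 320*c*n^5 + 256*c*n^4*s + 2048*c^2*n^4
            + 1152*c^2*n^3*s + 4096*c^3*n^3 + 1024*c^3*n^2*s := by positivity
      nlinarith [hkey, hRpos, h16]
    · have hkey : 16 * c ^ 4 * (32 * n ^ 2 * μ ^ 6 -
          (8 * c ^ 2 + 20 * c * n - n ^ 2 - 8 * c * s - n * s) * (μ ^ 2 - 1) ^ 4)
          = 0 := by
        linear_combination ((-1)*n*s^4 + 2*n^2*s^3 + (-2)*n^4*s + 1*n^5 + (-8)*c*s^4 + 42*c*n*s^3 + 2*c*n*s^3*μ^2 + (-18)*c*n^2*s^2 + (-2)*c*n^2*s^2*μ^2 + (-58)*c*n^3*s + (-2)*c*n^3*s*μ^2 + 42*c*n^4 + 2*c*n^4*μ^2 + (-8)*c^2*s^3 + 16*c^2*s^3*μ^2 + 44*c^2*n*s^2 + (-64)*c^2*n*s^2*μ^2 + (-4)*c^2*n*s^2*μ^4 + (-328)*c^2*n^2*s + (-32)*c^2*n^2*s*μ^2 + 292*c^2*n^3 + 80*c^2*n^3*μ^2 + 4*c^2*n^3*μ^4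 + (-16)*c^3*s^2 + 48*c^3*s^2*μ^2 + (-32)*c^3*s^2*μ^4 + 72*c^3*n*s + (-168)*c^3*n*s*μ^2 + 88*c^3*n*s*μ^4 + 8*c^3*n*s*μ^6 + 184*c^3*n^2 + 424*c^3*n^2*μ^2 + 152*c^3*n^2*μ^4 + 8*c^3*n^2*μ^6 + (-32)*c^4*s + 128*c^4*s*μ^2 + (-160)*c^4*s*μ^4 + 64*c^4*s*μ^6 + 128*c^4*n + (-416)*c^4*n*μ^2 + 448*c^4*n*μ^4 + (-160)*c^4*n*μ^6 + 64*c^5 + (-192)*c^5*μ^2 + 192*c^5*μ^4 + (-64)*c^5*μ^6) * hcase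
          + (1*n*s^3 + (-3)*n^2*s^2 + 3*n^3*s + (-1)*n^4 + 8*c*s^3 + (-52)*c*n*s^2 + 80*c*n^2*s + (-36)*c*n^3 + (-8)*c^2*s^2 + 96*c^2*n*s + (-88)*c^2*n^2 + (-64)*c^3*n) * hs2
      nlinarith [hkey, h16]
  have hd4 : 0 < (μ ^ 2 - 1) ^ 4 := by positivity
  have hAlam : 8 * c ^ 2 + 20 * c * n - n ^ 2 - 8 * c * s - n * s ≤ 8 * lam ^ 2 := by
    nlinarith [hX, h2, hd4]
  -- conclude
  have hfin : Real.sqrt (1 / 8) *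
      Real.sqrt (8 * c ^ 2 + 20 * c * n - n ^ 2 - 8 * c * s - n * s) ≤ -lam := by
    rw [← Real.sqrt_mul (by norm_num : (0:ℝ) ≤ 1 / 8)]
    have hle : (1 / 8) * (8 * c ^ 2 + 20 * c * n - n ^ 2 - 8 * c * s - n * s)
        ≤ (-lam) ^ 2 := by nlinarith [hAlam]
    calc Real.sqrt ((1 / 8) * (8 * c ^ 2 + 20 * c * n - n ^ 2 - 8 * c * s - n * s))
        ≤ Real.sqrt ((-lam) ^ 2) := Real.sqrt_le_sqrt hle
      _ = -lam := Real.sqrt_sq (by linarith)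
  linarith [hfin]
end

section
/- Let n > 1 and c > n. Setting γ = sqrt((c−n)/c), the quantity λ_cut(c) = sqrt(1/8)·sqrt(8c² + 20cn − n² − 8c·sqrt(n²+8cn) − n·sqrt(n²+8cn)) satisfies the asymptotic expansion λ_cut = (2/(3√3))·n·γ³ + O(γ⁵) as γ → 0. -/
/-!
Put `x = γ²`, so `c = n / (1 - x)`. Both square roots in `λ_cut` are rational multiples of
`q = √((9 - x) / (1 - x))`, and the radicand equals `n² (D - S) / (1 - x)²` with
`D = 27 - 18x - x²` and `S = √((9 - x)³ (1 - x))`. Since `D² - S² = 64 x³`, rationalizing gives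
`λ_cut = n γ³ F(γ²)` with `F(x) = √8 / ((1 - x) √(D + S))`, a function smooth at `0` with
`F(0) = 2 / (3√3)`. Hence `λ_cut - F(0) n γ³ = n γ³ (F(γ²) - F(0)) = O(γ⁵)`.
-/

open Filter Asymptotics Set Topology

noncomputable def lambdaCut (n c : ℝ) : ℝ :=
  √(1 / 8) * √(8 * c ^ 2 + 20 * c * n - n ^ 2 - 8 * c * √(n ^ 2 + 8 * c * n)
    - n * √(n ^ 2 + 8 * c * n))

noncomputable def cutConj (x : ℝ) : ℝ := 27 - 18 * x - x ^ 2 + √((9 - x) ^ 3 * (1 - x))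

noncomputable def cutProfile (x : ℝ) : ℝ := √8 / ((1 - x) * √(cutConj x))

theorem DifferentiableAt.isBigO_comp_sq_sub {E : Type*} [NormedAddCommGroup E]
    [NormedSpace ℝ E] {f : ℝ → E} (hf : DifferentiableAt ℝ f 0) :
    (fun t : ℝ => f (t ^ 2) - f 0) =O[𝓝 0] fun t => t ^ 2 := by
  have hsq : Tendsto (fun t : ℝ => t ^ 2) (𝓝 0) (𝓝 0) := by
    simpa using (continuous_pow 2).tendsto (0 : ℝ)
  simpa [Function.comp_def] using hf.hasFDerivAt.isBigO_sub.comp_tendsto hsq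

section CutProfile

variable {x : ℝ}

theorem cutConj_pos (hx0 : 0 ≤ x) (hx1 : x < 1) : 0 < cutConj x := by
  have := Real.sqrt_nonneg ((9 - x) ^ 3 * (1 - x))
  unfold cutConj
  nlinarith

theorem cutConj_zero : cutConj 0 = 54 := by
  have h : √((9 - (0 : ℝ)) ^ 3 * (1 - 0)) = 27 := by
    rw [Real.sqrt_eq_iff_mul_self_eq_of_pos (by norm_num)]
    norm_num
  rw [cutConj, h]
  norm_num

theorem cutProfile_zero : cutProfile 0 = 2 / (3 * √3) := by
  have h54 : √54 = √2 * (3 * √3) := by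
    rw [show (54 : ℝ) = 2 * 3 ^ 2 * 3 by norm_num, Real.sqrt_mul (by norm_num),
      Real.sqrt_mul (by norm_num), Real.sqrt_sq (by norm_num)]
    ring
  have h8 : √8 = 2 * √2 := by
    rw [show (8 : ℝ) = 2 ^ 2 * 2 by norm_num, Real.sqrt_mul (by norm_num),
      Real.sqrt_sq (by norm_num)]
  have h2 : √2 ≠ 0 := by positivity
  rw [cutProfile, cutConj_zero, h54, h8]
  field_simp
  ring

theorem differentiableAt_cutProfile (hx0 : 0 ≤ x) (hx1 : x < 1) :
    DifferentiableAt ℝ cutProfile x := by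
  have hrad : (9 - x) ^ 3 * (1 - x) ≠ 0 := by
    have : 0 < 1 - x := by linarith
    have : 0 < 9 - x := by linarith
    positivity
  have hsqrt : DifferentiableAt ℝ (fun y : ℝ => √((9 - y) ^ 3 * (1 - y))) x :=
    (by fun_prop : DifferentiableAt ℝ (fun y : ℝ => (9 - y) ^ 3 * (1 - y)) x).sqrt hrad
  have hconj : DifferentiableAt ℝ cutConj x := by
    unfold cutConj
    fun_prop
  have hden : (1 - x) * √(cutConj x) ≠ 0 :=
    mul_ne_zero (by linarith) (Real.sqrt_pos.2 (cutConj_pos hx0 hx1)).ne'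
  exact (differentiableAt_const _).div
    ((by fun_prop : DifferentiableAt ℝ (fun y : ℝ => 1 - y) x).mul
      (hconj.sqrt (cutConj_pos hx0 hx1).ne')) hden

end CutProfile

section Rationalization

variable {n x : ℝ}

theorem sub_sqrt_mul_cutConj (hx : x ≤ 1) :
    (27 - 18 * x - x ^ 2 - √((9 - x) ^ 3 * (1 - x))) * cutConj x = 64 * x ^ 3 := by
  have hS := Real.sq_sqrt (show 0 ≤ (9 - x) ^ 3 * (1 - x) by
    have : 0 ≤ 1 - x := by linarith
    have : 0 ≤ 9 - x := by linarith
    positivity)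
  rw [cutConj]
  linear_combination -hS

theorem sqrt_sq_add_eight_div_one_sub_mul (hn : 0 ≤ n) (hx : x < 1) :
    √(n ^ 2 + 8 * (n / (1 - x)) * n) = n * √((9 - x) / (1 - x)) := by
  have h1x : 1 - x ≠ 0 := by linarith
  rw [show n ^ 2 + 8 * (n / (1 - x)) * n = n ^ 2 * ((9 - x) / (1 - x)) by field_simp; ring,
    Real.sqrt_mul (sq_nonneg n), Real.sqrt_sq hn]

theorem sqrt_nine_sub_cube_mul_one_sub (hx : x < 1) :
    √((9 - x) ^ 3 * (1 - x)) = (9 - x) * (1 - x) * √((9 - x) / (1 - x)) := by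
  have h1x : 1 - x ≠ 0 := by linarith
  rw [show (9 - x) ^ 3 * (1 - x) = ((9 - x) * (1 - x)) ^ 2 * ((9 - x) / (1 - x)) by
      field_simp,
    Real.sqrt_mul (sq_nonneg _), Real.sqrt_sq (by nlinarith)]

theorem lambdaCut_radicand_eq (hn : 0 ≤ n) (hx : x < 1) :
    8 * (n / (1 - x)) ^ 2 + 20 * (n / (1 - x)) * n - n ^ 2
        - 8 * (n / (1 - x)) * √(n ^ 2 + 8 * (n / (1 - x)) * n)
        - n * √(n ^ 2 + 8 * (n / (1 - x)) * n)
      = n ^ 2 * (27 - 18 * x - x ^ 2 - √((9 - x) ^ 3 * (1 - x))) / (1 - x) ^ 2 := by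
  have h1x : 1 - x ≠ 0 := by linarith
  rw [sqrt_sq_add_eight_div_one_sub_mul hn hx, sqrt_nine_sub_cube_mul_one_sub hx]
  field_simp
  ring

theorem lambdaCut_eq {γ : ℝ} (hn : 0 ≤ n) (hγ0 : 0 ≤ γ) (hγ1 : γ < 1) :
    lambdaCut n (n / (1 - γ ^ 2)) = n * γ ^ 3 * cutProfile (γ ^ 2) := by
  have hx0 : 0 ≤ γ ^ 2 := sq_nonneg γ
  have hx1 : γ ^ 2 < 1 := by nlinarith
  have h1x : 0 < 1 - γ ^ 2 := by linarith
  have hT := cutConj_pos hx0 hx1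
  have hprofile_sq : cutProfile (γ ^ 2) ^ 2 = 8 / ((1 - γ ^ 2) ^ 2 * cutConj (γ ^ 2)) := by
    rw [cutProfile, div_pow, mul_pow, Real.sq_sqrt hT.le, Real.sq_sqrt (by norm_num)]
  have hradicand : n ^ 2 * (27 - 18 * γ ^ 2 - (γ ^ 2) ^ 2 - √((9 - γ ^ 2) ^ 3 * (1 - γ ^ 2)))
        / (1 - γ ^ 2) ^ 2 = 8 * (n * γ ^ 3 * cutProfile (γ ^ 2)) ^ 2 := by
    rw [eq_div_of_mul_eq hT.ne' (sub_sqrt_mul_cutConj hx1.le), mul_pow, hprofile_sq]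
    field_simp
    ring
  have hprofile_nonneg : 0 ≤ cutProfile (γ ^ 2) := by
    rw [cutProfile]
    positivity
  rw [lambdaCut, lambdaCut_radicand_eq hn hx1, hradicand, ← Real.sqrt_mul (by norm_num),
    show 1 / 8 * (8 * (n * γ ^ 3 * cutProfile (γ ^ 2)) ^ 2)
      = (n * γ ^ 3 * cutProfile (γ ^ 2)) ^ 2 by ring,
    Real.sqrt_sq (by positivity)]

end Rationalization

/-- For `n > 1`, with `c = n/(1−γ²)` so that `γ = sqrt((c−n)/c)`, the branch-cut
location `λ_cut(c) = sqrt(1/8)·sqrt(8c² + 20cn − n² − 8c·sqrt(n²+8cn) − n·sqrt(n²+8cn))`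
satisfies `λ_cut = (2/(3√3)) n γ³ + O(γ⁵)` as `γ → 0⁺`. -/
theorem lambda_cut_expansion (n : ℝ) (hn : 1 < n) :
    (fun γ : ℝ =>
        Real.sqrt (1 / 8) *
          Real.sqrt (8 * (n / (1 - γ ^ 2)) ^ 2 + 20 * (n / (1 - γ ^ 2)) * n - n ^ 2
            - 8 * (n / (1 - γ ^ 2)) *
                Real.sqrt (n ^ 2 + 8 * (n / (1 - γ ^ 2)) * n)
            - n * Real.sqrt (n ^ 2 + 8 * (n / (1 - γ ^ 2)) * n))
        - (2 / (3 * Real.sqrt 3)) * n * γ ^ 3)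
      =O[nhdsWithin 0 (Set.Ioo (0 : ℝ) 1)] (fun γ : ℝ => γ ^ 5) := by
  change (fun γ : ℝ => lambdaCut n (n / (1 - γ ^ 2)) - 2 / (3 * √3) * n * γ ^ 3) =O[_] _
  have hprofile : (fun γ : ℝ => cutProfile (γ ^ 2) - cutProfile 0) =O[𝓝[Ioo 0 1] 0]
      fun γ => γ ^ 2 :=
    ((differentiableAt_cutProfile le_rfl one_pos).isBigO_comp_sq_sub).mono nhdsWithin_le_nhds
  have hproduct := ((isBigO_refl (fun γ : ℝ => γ ^ 3) _).const_mul_left n).mul hprofile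
  refine hproduct.congr' ?_ (Eventually.of_forall fun γ => by ring)
  filter_upwards [self_mem_nhdsWithin] with γ ⟨hγ0, hγ1⟩
  rw [lambdaCut_eq (by linarith) hγ0.le hγ1, cutProfile_zero]
  ring
end

section
/- For every γ ∈ [0,1], sqrt(1 + (5/16)(1−γ²) − (1/16)·sqrt(64(1−γ²) + 17(1−γ²)²)) ≥ (1/2)·sqrt((1−γ)(3+γ)). -/
/-- For every `γ ∈ [0,1]`,
`sqrt(1 + (5/16)(1−γ²) − (1/16)·sqrt(64(1−γ²) + 17(1−γ²)²)) ≥ (1/2)·sqrt((1−γ)(3+γ))`. -/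
theorem critical_point_dominates_discriminant_root :
    ∀ γ : ℝ, γ ∈ Set.Icc (0 : ℝ) 1 →
      (1 / 2) * Real.sqrt ((1 - γ) * (3 + γ)) ≤
        Real.sqrt (1 + (5 / 16) * (1 - γ ^ 2)
          - (1 / 16) * Real.sqrt (64 * (1 - γ ^ 2) + 17 * (1 - γ ^ 2) ^ 2)) := by
  intro γ ⟨h0, h1⟩
  have hB : (0:ℝ) ≤ (1 - γ) * (3 + γ) := by nlinarith
  have hs : Real.sqrt (64 * (1 - γ ^ 2) + 17 * (1 - γ ^ 2) ^ 2) ≤ 9 + 8 * γ - γ ^ 2 := by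
    rw [show (9 + 8 * γ - γ ^ 2) = Real.sqrt ((9 + 8 * γ - γ ^ 2) ^ 2) by
      rw [Real.sqrt_sq (by nlinarith)]]
    apply Real.sqrt_le_sqrt
    nlinarith [sq_nonneg γ, sq_nonneg (1 - γ)]
  have hL : (0:ℝ) ≤ (1 / 2) * Real.sqrt ((1 - γ) * (3 + γ)) := by
    positivity
  have hA : (0:ℝ) ≤ 1 + 5 / 16 * (1 - γ ^ 2) - 1 / 16 * Real.sqrt (64 * (1 - γ ^ 2) + 17 * (1 - γ ^ 2) ^ 2) := by
    nlinarith [hs]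
  rw [Real.le_sqrt hL hA]
  have hsq : Real.sqrt ((1 - γ) * (3 + γ)) ^ 2 = (1 - γ) * (3 + γ) :=
    Real.sq_sqrt hB
  nlinarith [hs, hsq]
end

section
/- Fix n > 1, c > n, and set r = n/c ∈ (0,1). The function f(α) = cα(2 − r/(4(1−α²) + r)) is strictly increasing on the interval (−(1/2)sqrt((1−γ)(3+γ)), 0), where γ = sqrt(1−r), and maps this interval onto (−(c/4)sqrt(1−γ)(γ+3)^{3/2}, 0). -/
/-!
Write `r = n/c`, `γ = √(1 - r)` and `a = √((1 - γ)(3 + γ))/2`, so that `4(1 - a²) = (1 + γ)²`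
and the denominator `D = 4(1 - α²) + r` stays `≥ 2(1 + γ)` on `[-a, a]`. There
`f'(α) = c(2D² - r(4 + 4α² + r))/D²`, and with `s = 4(a² - α²) ≥ 0` the numerator is a
polynomial in `s` and `γ` with positive coefficients, so `f` is strictly increasing on `[-a, a]`.
As `f(0) = 0` and `f(-a) = -(c/4)√(1 - γ)(γ + 3)^{3/2}`, the intermediate value theorem gives
the image.
-/

open Real Set

noncomputable def realPartMap (c r α : ℝ) : ℝ := c * α * (2 - r / (4 * (1 - α ^ 2) + r))

noncomputable def monoRadius (r : ℝ) : ℝ := 1 / 2 * √((1 - √(1 - r)) * (3 + √(1 - r)))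

theorem hasDerivAt_realPartMap (c r α : ℝ) (hD : 4 * (1 - α ^ 2) + r ≠ 0) :
    HasDerivAt (realPartMap c r)
      (c * (2 * (4 * (1 - α ^ 2) + r) ^ 2 - r * (4 + 4 * α ^ 2 + r)) /
        (4 * (1 - α ^ 2) + r) ^ 2) α := by
  have hden : HasDerivAt (fun x : ℝ => 4 * (1 - x ^ 2) + r) (4 * (0 - 2 * α)) α := by
    simpa using (((hasDerivAt_pow 2 α).const_sub 1).const_mul 4).add_const r
  have h := ((hasDerivAt_id α).const_mul c).mul ((hasDerivAt_const α r).div hden hD |>.const_sub 2)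
  refine h.congr_deriv ?_
  simp only [Pi.div_apply, id]
  field_simp
  ring

theorem realPartMap_zero (c r : ℝ) : realPartMap c r 0 = 0 := by
  simp [realPartMap]

section

variable {r : ℝ}

theorem sqrt_one_sub_mem_Ioo (hr0 : 0 < r) (hr1 : r < 1) : √(1 - r) ∈ Ioo 0 1 :=
  ⟨sqrt_pos.2 (by linarith), (sqrt_lt' one_pos).2 (by linarith)⟩

theorem monoRadius_pos (hr0 : 0 < r) (hr1 : r < 1) : 0 < monoRadius r := by
  obtain ⟨hγ0, hγ1⟩ := sqrt_one_sub_mem_Ioo hr0 hr1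
  unfold monoRadius
  have : 0 < (1 - √(1 - r)) * (3 + √(1 - r)) := by nlinarith
  positivity

theorem monoRadius_sq (hr0 : 0 < r) (hr1 : r < 1) :
    monoRadius r ^ 2 = (1 - √(1 - r)) * (3 + √(1 - r)) / 4 := by
  obtain ⟨hγ0, hγ1⟩ := sqrt_one_sub_mem_Ioo hr0 hr1
  rw [monoRadius, mul_pow, sq_sqrt (by nlinarith)]
  ring

theorem sq_le_monoRadius_sq (hr0 : 0 < r) (hr1 : r < 1) {α : ℝ}
    (hα : α ∈ Icc (-monoRadius r) (monoRadius r)) : α ^ 2 ≤ (1 - √(1 - r)) * (3 + √(1 - r)) / 4 :=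
  monoRadius_sq hr0 hr1 ▸ sq_le_sq' hα.1 hα.2

theorem realPartMap_denom_pos (hr0 : 0 < r) (hr1 : r < 1) {α : ℝ}
    (hα : α ∈ Icc (-monoRadius r) (monoRadius r)) : 0 < 4 * (1 - α ^ 2) + r := by
  have hα2 := sq_le_monoRadius_sq hr0 hr1 hα
  have hγ0 := (sqrt_one_sub_mem_Ioo hr0 hr1).1
  have hγ2 : √(1 - r) ^ 2 = 1 - r := sq_sqrt (by linarith)
  nlinarith

theorem realPartMap_deriv_numerator_pos {γ t : ℝ} (hγ : 0 < γ) (ht : 0 ≤ t)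
    (hts : 4 * t ≤ (1 - γ) * (3 + γ)) :
    0 < 2 * (4 * (1 - t) + (1 - γ ^ 2)) ^ 2 - (1 - γ ^ 2) * (4 + 4 * t + (1 - γ ^ 2)) := by
  have hγ1 : γ ≤ 1 := by nlinarith
  set s := (1 - γ) * (3 + γ) - 4 * t with hs
  have hs0 : 0 ≤ s := by linarith
  have hid : 2 * (4 * (1 - t) + (1 - γ ^ 2)) ^ 2 - (1 - γ ^ 2) * (4 + 4 * t + (1 - γ ^ 2))
      = 2 * s ^ 2 + s * (9 + 8 * γ - γ ^ 2) + 2 * γ * (1 + γ) * (9 - γ ^ 2) := by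
    rw [hs]; ring
  have hlin : 0 ≤ s * (9 + 8 * γ - γ ^ 2) := mul_nonneg hs0 (by nlinarith)
  have hconst : 0 < 2 * γ * (1 + γ) * (9 - γ ^ 2) := by
    have : 0 < 9 - γ ^ 2 := by nlinarith
    positivity
  rw [hid]
  positivity

theorem continuousOn_realPartMap (c : ℝ) (hr0 : 0 < r) (hr1 : r < 1) :
    ContinuousOn (realPartMap c r) (Icc (-monoRadius r) (monoRadius r)) := fun _ hα =>
  (hasDerivAt_realPartMap c r _ (realPartMap_denom_pos hr0 hr1 hα).ne').continuousAt
    |>.continuousWithinAt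

theorem deriv_realPartMap_pos {c : ℝ} (hc : 0 < c) (hr0 : 0 < r) (hr1 : r < 1) {α : ℝ}
    (hα : α ∈ Icc (-monoRadius r) (monoRadius r)) : 0 < deriv (realPartMap c r) α := by
  have hD := realPartMap_denom_pos hr0 hr1 hα
  rw [(hasDerivAt_realPartMap c r α hD.ne').deriv]
  have hγ2 : r = 1 - √(1 - r) ^ 2 := by rw [sq_sqrt (by linarith)]; ring
  have hnum := realPartMap_deriv_numerator_pos (sqrt_one_sub_mem_Ioo hr0 hr1).1 (sq_nonneg α)
    (by linarith [sq_le_monoRadius_sq hr0 hr1 hα])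
  rw [← hγ2] at hnum
  positivity

theorem realPartMap_strictMonoOn {c : ℝ} (hc : 0 < c) (hr0 : 0 < r) (hr1 : r < 1) :
    StrictMonoOn (realPartMap c r) (Icc (-monoRadius r) (monoRadius r)) :=
  strictMonoOn_of_deriv_pos (convex_Icc _ _) (continuousOn_realPartMap c hr0 hr1)
    fun _ hα => deriv_realPartMap_pos hc hr0 hr1 (interior_subset hα)

theorem realPartMap_neg_monoRadius (c : ℝ) (hr0 : 0 < r) (hr1 : r < 1) :
    realPartMap c r (-monoRadius r) =
      -(c / 4 * √(1 - √(1 - r)) * (√(1 - r) + 3) ^ ((3 : ℝ) / 2)) := by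
  obtain ⟨hγ0, hγ1⟩ := sqrt_one_sub_mem_Ioo hr0 hr1
  set γ := √(1 - r) with hγ
  have hr : r = 1 - γ ^ 2 := by rw [hγ, sq_sqrt (by linarith)]; ring
  have hD : 4 * (1 - (-monoRadius r) ^ 2) + r = 2 * (1 + γ) := by
    rw [neg_sq, monoRadius_sq hr0 hr1, ← hγ, hr]; ring
  have hfactor : 2 - r / (2 * (1 + γ)) = (3 + γ) / 2 := by
    rw [hr]; field_simp; ring
  have hpow : (γ + 3) ^ ((3 : ℝ) / 2) = (3 + γ) * √(3 + γ) := by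
    rw [show (3 : ℝ) / 2 = 1 + 1 / 2 by norm_num, rpow_add (by linarith), rpow_one,
      ← sqrt_eq_rpow, add_comm]
  rw [realPartMap, hD, hfactor, monoRadius, ← hγ, sqrt_mul (by linarith), hpow]
  ring

end

/-- Fix `n > 1`, `c > n`, `r = n/c`, `γ = sqrt(1−r) = sqrt((c−n)/c)`. The map
`f(α) = cα(2 − r/(4(1−α²) + r))` is strictly increasing on
`(−(1/2)sqrt((1−γ)(3+γ)), 0)` and maps this interval onto
`(−(c/4)sqrt(1−γ)(γ+3)^{3/2}, 0)`. -/
theorem real_part_map_strictMono_image (n c : ℝ) (hn : 1 < n) (hc : n < c) :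
    StrictMonoOn
        (fun α : ℝ => c * α * (2 - (n / c) / (4 * (1 - α ^ 2) + n / c)))
        (Set.Ioo (-(1 / 2 * Real.sqrt
          ((1 - Real.sqrt (1 - n / c)) * (3 + Real.sqrt (1 - n / c))))) 0) ∧
    (fun α : ℝ => c * α * (2 - (n / c) / (4 * (1 - α ^ 2) + n / c))) ''
        (Set.Ioo (-(1 / 2 * Real.sqrt
          ((1 - Real.sqrt (1 - n / c)) * (3 + Real.sqrt (1 - n / c))))) 0) =
      Set.Ioo (-(c / 4 * Real.sqrt (1 - Real.sqrt (1 - n / c)) *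
        (Real.sqrt (1 - n / c) + 3) ^ ((3 : ℝ) / 2))) 0 := by
  have hc0 : 0 < c := by linarith
  have hr0 : 0 < n / c := div_pos (by linarith) hc0
  have hr1 : n / c < 1 := (div_lt_one hc0).2 hc
  show StrictMonoOn (realPartMap c (n / c)) (Ioo (-monoRadius (n / c)) 0) ∧
    realPartMap c (n / c) '' Ioo (-monoRadius (n / c)) 0 = _
  have hsub : Icc (-monoRadius (n / c)) 0 ⊆ Icc (-monoRadius (n / c)) (monoRadius (n / c)) :=
    Icc_subset_Icc_right (monoRadius_pos hr0 hr1).le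
  have hmono := (realPartMap_strictMonoOn hc0 hr0 hr1).mono hsub
  refine ⟨hmono.mono Ioo_subset_Icc_self, ?_⟩
  rw [((continuousOn_realPartMap c hr0 hr1).mono hsub).image_Ioo_of_strictMonoOn
    (by linarith [monoRadius_pos hr0 hr1]) hmono, realPartMap_neg_monoRadius c hr0 hr1,
    realPartMap_zero]
end
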